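/- For real y, z with 0 ≤ y < 1 and 0 ≤ z < 1 (the 2D triangle VPV identity, case a=1, b=0): ∑_{(j,k): 1 ≤ j ≤ k, gcd(j,k)=1} (1/j) · log(1 - y^j z^k) = (1/(1-z)) · log(1 - yz). Equivalently, ∏_{1≤j≤k, gcd(j,k)=1} (1 - y^j z^k)^{1/j} = (1 - yz)^{1/(1-z)}. -/

import Mathlib

/-!
The Cauchy product of `∑_{j ≥ 1} (yz)^j / j = -log (1 - yz)` with `∑_{n ≥ 0} z^n = 1 / (1 - z)`,
reindexed by `k = j + n`, is `∑_{1 ≤ j ≤ k} y^j z^k / j`. Group these lattice points along the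
rays through the origin: each ray is generated by a unique visible point `(j, k)` (the one with
`gcd (j, k) = 1`) and contributes `∑_{m ≥ 1} (y^j z^k)^m / (j m) = -(1/j) log (1 - y^j z^k)`.
Absolute convergence justifies both rearrangements; exponentiating gives the product form.
-/

open Real

abbrev TrianglePoint := {p : ℕ+ × ℕ+ // p.1 ≤ p.2}

abbrev VisibleTrianglePoint := {p : ℕ+ × ℕ+ // p.1 ≤ p.2 ∧ Nat.gcd (p.1 : ℕ) (p.2 : ℕ) = 1}

lemma hasSum_pnat_pow_div_log_of_abs_lt_one {x : ℝ} (hx : |x| < 1) :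
    HasSum (fun m : ℕ+ => x ^ (m : ℕ) / m) (-log (1 - x)) := by
  rw [hasSum_pnat_iff_hasSum_succ (f := fun n : ℕ => x ^ n / n)]
  exact_mod_cast hasSum_pow_div_log_of_abs_lt_one hx

lemma abs_pow_mul_pow_lt_one {y z : ℝ} (hy : |y| ≤ 1) (hz : |z| < 1) (j : ℕ) {k : ℕ}
    (hk : k ≠ 0) : |y ^ j * z ^ k| < 1 := by
  rw [abs_mul, abs_pow, abs_pow]
  exact mul_lt_one_of_nonneg_of_lt_one_right (pow_le_one₀ (abs_nonneg y) hy)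
    (by positivity) (pow_lt_one₀ (abs_nonneg z) hz hk)

def TrianglePoint.equivPNatProdNat : ℕ+ × ℕ ≃ TrianglePoint where
  toFun x := ⟨(x.1, ⟨x.1 + x.2, by positivity⟩), (PNat.coe_le_coe _ _).1 (Nat.le_add_right _ _)⟩
  invFun p := (p.1.1, p.1.2 - p.1.1)
  left_inv x := by ext <;> simp
  right_inv p :=
    Subtype.ext <| Prod.ext rfl <| PNat.eq <| Nat.add_sub_cancel' ((PNat.coe_le_coe _ _).2 p.2)

lemma hasSum_trianglePoint {y z : ℝ} (hy : |y| ≤ 1) (hz : |z| < 1) :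
    HasSum (fun p : TrianglePoint => y ^ (p.1.1 : ℕ) * z ^ (p.1.2 : ℕ) / p.1.1)
      (-log (1 - y * z) / (1 - z)) := by
  have hyz : |y * z| < 1 := by simpa using abs_pow_mul_pow_lt_one hy hz 1 one_ne_zero
  have hlog := hasSum_pnat_pow_div_log_of_abs_lt_one hyz
  have hgeom := hasSum_geometric_of_abs_lt_one hz
  have hlog_norm : Summable fun m : ℕ+ => ‖(y * z) ^ (m : ℕ) / m‖ := by
    simpa [abs_div, abs_pow] using
      (hasSum_pnat_pow_div_log_of_abs_lt_one (x := |y * z|) (by rwa [abs_abs])).summable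
  have hprod := hlog.mul hgeom (summable_mul_of_summable_norm hlog_norm hgeom.summable.norm)
  rw [← TrianglePoint.equivPNatProdNat.hasSum_iff, div_eq_mul_inv]
  refine hprod.congr_fun fun x => ?_
  show y ^ (x.1 : ℕ) * z ^ ((x.1 : ℕ) + x.2) / (x.1 : ℕ) =
    (y * z) ^ (x.1 : ℕ) / (x.1 : ℕ) * z ^ x.2
  rw [mul_pow, pow_add]
  ring

def VisibleTrianglePoint.prodPNatEquiv : VisibleTrianglePoint × ℕ+ ≃ TrianglePoint where
  toFun x := ⟨(x.1.1.1 * x.2, x.1.1.2 * x.2), mul_le_mul_left x.1.2.1 _⟩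
  invFun p :=
    let g := Nat.gcd p.1.1 p.1.2
    have hg : 0 < g := Nat.gcd_pos_of_pos_left _ p.1.1.pos
    (⟨(⟨p.1.1 / g, Nat.div_pos (Nat.gcd_le_left _ p.1.1.pos) hg⟩,
        ⟨p.1.2 / g, Nat.div_pos (Nat.gcd_le_right _ p.1.2.pos) hg⟩),
      Nat.div_le_div_right ((PNat.coe_le_coe _ _).2 p.2), Nat.coprime_div_gcd_div_gcd hg⟩,
      ⟨g, hg⟩)
  left_inv := by
    rintro ⟨⟨⟨j, k⟩, -, hjk⟩, m⟩
    have hg : Nat.gcd (j * m) (k * m) = m := by rw [Nat.gcd_mul_right, hjk, one_mul]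
    ext <;> simp [hg] <;> rfl
  right_inv := by
    rintro ⟨⟨j, k⟩, -⟩
    exact Subtype.ext <| Prod.ext (PNat.eq <| Nat.div_mul_cancel <| Nat.gcd_dvd_left _ _)
      (PNat.eq <| Nat.div_mul_cancel <| Nat.gcd_dvd_right _ _)

lemma hasSum_visibleTrianglePoint_log {y z : ℝ} (hy : |y| ≤ 1) (hz : |z| < 1) :
    HasSum (fun t : VisibleTrianglePoint =>
        1 / (t.1.1 : ℝ) * log (1 - y ^ (t.1.1 : ℕ) * z ^ (t.1.2 : ℕ)))
      (1 / (1 - z) * log (1 - y * z)) := by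
  have hray : ∀ t : VisibleTrianglePoint,
      HasSum (fun m : ℕ+ => (y ^ ((t.1.1 * m : ℕ+) : ℕ) * z ^ ((t.1.2 * m : ℕ+) : ℕ)) /
          ((t.1.1 * m : ℕ+) : ℝ))
        (-(1 / (t.1.1 : ℝ) * log (1 - y ^ (t.1.1 : ℕ) * z ^ (t.1.2 : ℕ)))) := fun t => by
    rw [← mul_neg]
    refine ((hasSum_pnat_pow_div_log_of_abs_lt_one
      (abs_pow_mul_pow_lt_one hy hz _ t.1.2.ne_zero)).mul_left _).congr_fun fun m => ?_
    simp only [PNat.mul_coe, Nat.cast_mul, mul_pow, pow_mul]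
    field_simp
  have hsum := ((VisibleTrianglePoint.prodPNatEquiv.hasSum_iff).2
    (hasSum_trianglePoint hy hz)).prod_fiberwise hray
  simpa [neg_div, div_eq_inv_mul] using hsum.neg

lemma hasProd_visibleTrianglePoint_rpow {y z : ℝ} (hy : |y| ≤ 1) (hz : |z| < 1) :
    HasProd (fun t : VisibleTrianglePoint =>
        (1 - y ^ (t.1.1 : ℕ) * z ^ (t.1.2 : ℕ)) ^ ((1 : ℝ) / (t.1.1 : ℝ)))
      ((1 - y * z) ^ (1 / (1 - z))) := by
  have hpos {j k : ℕ} (hk : k ≠ 0) : 0 < 1 - y ^ j * z ^ k :=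
    sub_pos.2 (lt_of_abs_lt (abs_pow_mul_pow_lt_one hy hz j hk))
  rw [rpow_def_of_pos (by simpa using hpos (j := 1) one_ne_zero), mul_comm]
  refine (hasSum_visibleTrianglePoint_log hy hz).rexp.congr_fun fun t => ?_
  rw [Function.comp_apply, rpow_def_of_pos (hpos t.1.2.ne_zero), mul_comm]

theorem stmt_10 (y z : ℝ) (hy0 : 0 ≤ y) (hy1 : y < 1) (hz0 : 0 ≤ z) (hz1 : z < 1) :
    (∑' p : {p : ℕ+ × ℕ+ // p.1 ≤ p.2 ∧ Nat.gcd (p.1 : ℕ) (p.2 : ℕ) = 1},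
        (1 / (p.val.1 : ℝ)) *
          Real.log (1 - y ^ (p.val.1 : ℕ) * z ^ (p.val.2 : ℕ)) =
      1 / (1 - z) * Real.log (1 - y * z)) ∧
    (∏' p : {p : ℕ+ × ℕ+ // p.1 ≤ p.2 ∧ Nat.gcd (p.1 : ℕ) (p.2 : ℕ) = 1},
        (1 - y ^ (p.val.1 : ℕ) * z ^ (p.val.2 : ℕ)) ^ ((1 : ℝ) / (p.val.1 : ℝ)) =
      (1 - y * z) ^ (1 / (1 - z))) := by
  have hy : |y| ≤ 1 := abs_le.2 ⟨by linarith, hy1.le⟩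
  have hz : |z| < 1 := abs_lt.2 ⟨by linarith, hz1⟩
  exact ⟨(hasSum_visibleTrianglePoint_log hy hz).tsum_eq,
    (hasProd_visibleTrianglePoint_rpow hy hz).tprod_eq⟩
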